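/- Let k be a finite field extension of F_q of degree d, and (M,σ) a σ-module over k of rank r (so M is free of rank r over k⊗_{F_q}F_q[t] and σ is q-semilinear over k and F_q[t]-linear). Then σ^d: M → M is k⊗F_q[t]-linear, and the polynomial det(1 − Xσ^d | M) has coefficients in F_q[t] (not merely in k[t]). -/
import Mathlib


open Polynomial Matrix

/-- The coefficientwise `q^i`-power Frobenius on `k[t]`. -/
noncomputable def polyFrobPow {k : Type*} [Field k] (q i : ℕ) (g : Polynomial k) :
    Polynomial k :=
  g.sum fun j b => Polynomial.C (b ^ q ^ i) * Polynomial.X ^ j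

/-- The polynomial `det(1 - X·σ^d | M) ∈ k[t][X]`, for the σ-module with matrix `Φ`:
the `k[t]`-linear map `σ^d` has matrix `A = Φ · Φ^{(q)} · ⋯ · Φ^{(q^{d-1})}`. -/
noncomputable def eulerPoly {k : Type*} [Field k] (q d r : ℕ)
    (Φ : Matrix (Fin r) (Fin r) (Polynomial k)) : Polynomial (Polynomial k) :=
  Matrix.det
    (1 - (Polynomial.X : Polynomial (Polynomial k)) •
      Matrix.map (((List.range d).map fun i => Φ.map (polyFrobPow q i)).prod)
        Polynomial.C)

section aux
variable {k : Type*} [Field k]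

lemma polyFrobPow_eq_map (p m q i : ℕ) [Fact p.Prime] [CharP k p] (hq : q = p ^ m)
    (g : Polynomial k) : polyFrobPow q i g = g.map (iterateFrobenius k p (m * i)) := by
  rw [Polynomial.map, eval₂_eq_sum, polyFrobPow]
  congr 1; funext e a
  simp [iterateFrobenius_def, hq, ← pow_mul]

lemma polyFrobPow_zero (q : ℕ) (g : Polynomial k) : polyFrobPow q 0 g = g := by
  simpa [polyFrobPow] using Polynomial.sum_C_mul_X_pow_eq g

lemma frob_polyFrobPow (p m q i : ℕ) [Fact p.Prime] [CharP k p] (hq : q = p ^ m)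
    (g : Polynomial k) :
    (polyFrobPow q i g).map (iterateFrobenius k p m) = polyFrobPow q (i + 1) g := by
  rw [polyFrobPow_eq_map p m q i hq, polyFrobPow_eq_map p m q (i + 1) hq,
    Polynomial.map_map, ← iterateFrobenius_add]
  ring_nf

lemma polyFrobPow_card [Fintype k] (p m q d : ℕ) [Fact p.Prime] [CharP k p]
    (hq : q = p ^ m) (hcard : Fintype.card k = q ^ d) (g : Polynomial k) :
    polyFrobPow q d g = g := by
  rw [polyFrobPow]
  conv_rhs => rw [← Polynomial.sum_C_mul_X_pow_eq g]
  congr 1; funext e a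
  rw [← hcard, FiniteField.pow_card]

/-- general commuting lemma -/
lemma det_one_sub_X_smul_mul_comm {r : ℕ} (P Q : Matrix (Fin r) (Fin r) (Polynomial k)) :
    Matrix.det (1 - (Polynomial.X : Polynomial (Polynomial k)) • (P * Q).map Polynomial.C) =
    Matrix.det (1 - (Polynomial.X : Polynomial (Polynomial k)) • (Q * P).map Polynomial.C) := by
  have hmap : ∀ A B : Matrix (Fin r) (Fin r) (Polynomial k),
      (A * B).map (Polynomial.C :
        Polynomial k →+* Polynomial (Polynomial k)) = A.map Polynomial.C * B.map Polynomial.C :=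
    fun A B => _root_.map_mul ((Polynomial.C :
      Polynomial k →+* Polynomial (Polynomial k)).mapMatrix) A B
  rw [hmap, hmap, ← smul_mul_assoc, Matrix.det_one_sub_mul_comm, mul_smul_comm]

end aux

/-- Let `k/F_q` be a finite extension of degree `d` (so `#k = q^d`, `q = p^m`) and
`(M,σ)` a free σ-module of rank `r` over `k` — encoded by the matrix `Φ ∈ M_r(k[t])`
of `σ` on a basis, via `σ(m) = Φ · m^{(q)}`. Then the polynomial
`det(1 - X·σ^d | M) ∈ k[t][X]` has all its coefficients in `F_q[t]`: every
`k`-coefficient of every `t`-coefficient is fixed by the `q`-power Frobenius. -/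
theorem sigma_module_charpoly_coeffs_in_Fq {k : Type*} [Field k] [Fintype k]
    (p m q d r : ℕ) [Fact p.Prime] [CharP k p] (hq : q = p ^ m) (hm : 0 < m)
    (hd : 0 < d) (hcard : Fintype.card k = q ^ d)
    (Φ : Matrix (Fin r) (Fin r) (Polynomial k)) (i j : ℕ) :
    (((eulerPoly q d r Φ).coeff i).coeff j) ^ q =
      ((eulerPoly q d r Φ).coeff i).coeff j := by
  set fr : k →+* k := iterateFrobenius k p m with hfr
  set F : Polynomial k →+* Polynomial k := Polynomial.mapRingHom fr with hF
  set G : Polynomial (Polynomial k) →+* Polynomial (Polynomial k) :=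
    Polynomial.mapRingHom F with hG
  set f : ℕ → Matrix (Fin r) (Fin r) (Polynomial k) :=
    fun i => Φ.map (polyFrobPow q i) with hf
  set A : Matrix (Fin r) (Fin r) (Polynomial k) :=
    ((List.range d).map f).prod with hA
  -- Frobenius on entries shifts the index
  have hFf : ∀ n : ℕ, (f n).map F = f (n + 1) := by
    intro n
    rw [hf]
    apply Matrix.ext; intro a b
    simp only [Matrix.map_apply, hF, coe_mapRingHom]
    exact frob_polyFrobPow p m q n hq _
  -- f d = f 0 = Φ
  have hfd : f d = Φ := by
    apply Matrix.ext; intro a b; exact polyFrobPow_card p m q d hq hcard _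
  have hf0 : f 0 = Φ := by
    apply Matrix.ext; intro a b; exact polyFrobPow_zero q _
  obtain ⟨e, rfl⟩ : ∃ e, d = e + 1 := ⟨d - 1, (Nat.succ_pred_eq_of_pos hd).symm⟩
  set B : Matrix (Fin r) (Fin r) (Polynomial k) :=
    ((List.range e).map fun i => f (i + 1)).prod with hB
  have hAform : A = Φ * B := by
    rw [hA, List.range_succ_eq_map, List.map_cons, List.prod_cons, hf0, List.map_map, hB]
    rfl
  -- Frobenius of A
  have hFA : A.map F = B * Φ := by
    have : A.map F = F.mapMatrix A := rfl
    rw [this, hA, map_list_prod, List.map_map]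
    have : (List.range (e + 1)).map (⇑F.mapMatrix ∘ f) = (List.range (e + 1)).map
        fun i => f (i + 1) := by
      apply List.map_congr_left
      intro n _
      exact hFf n
    rw [this, List.range_succ, List.map_append, List.prod_append, List.map_singleton,
      List.prod_singleton, hfd, hB]
  -- G fixes eulerPoly
  have hGE : G (eulerPoly q (e + 1) r Φ) = eulerPoly q (e + 1) r Φ := by
    rw [eulerPoly, ← hA, RingHom.map_det, RingHom.mapMatrix_apply]
    have hmat : (1 - (Polynomial.X : Polynomial (Polynomial k)) • A.map Polynomial.C).map G =
        1 - (Polynomial.X : Polynomial (Polynomial k)) • (A.map F).map Polynomial.C := by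
      apply Matrix.ext; intro a b
      simp only [Matrix.map_apply, Matrix.sub_apply, Matrix.smul_apply, Matrix.one_apply,
        smul_eq_mul, hG, coe_mapRingHom, Polynomial.map_sub, Polynomial.map_mul,
        Polynomial.map_X, Polynomial.map_C, apply_ite (Polynomial.map F),
        Polynomial.map_one, Polynomial.map_zero]
    rw [hmat, hFA, hAform, det_one_sub_X_smul_mul_comm]
  -- extract coefficients
  have h := congrArg (fun P : Polynomial (Polynomial k) => (P.coeff i).coeff j) hGE
  simp only [hG, coe_mapRingHom, Polynomial.coeff_map, hF, hfr, iterateFrobenius_def] at h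
  rw [← hq] at h
  exact h
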